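/- For every integer n ≥ 1, the sixth power sum of the roots of the Yablonskii–Vorob'ev polynomial Q_n equals s_{n,6} = 2 n (n² − 1)(n + 2)(n² + n − 5). -/

import Mathlib

open Polynomial

/-- The `m`-th power sum `s_{n,m}` of the complex roots (with multiplicity)
of the polynomial `Q n`. -/
noncomputable def powerSum (Q : ℕ → Polynomial ℚ) (n m : ℕ) : ℂ :=
  (((Q n).map (algebraMap ℚ ℂ)).roots.map (· ^ m)).sum

section Aux
open Finset

lemma esymm_cons (a : ℂ) (s : Multiset ℂ) (k : ℕ) :
    (a ::ₘ s).esymm (k+1) = s.esymm (k+1) + a * s.esymm k := by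
  simp only [Multiset.esymm, Multiset.powersetCard_cons, Multiset.map_add, Multiset.sum_add,
    Multiset.map_map, Function.comp_def, Multiset.prod_cons]
  rw [← Multiset.sum_map_mul_left]

lemma newton6 (s : Multiset ℂ) :
    (s.map (· ^ 1)).sum = s.esymm 1 ∧
    (s.map (· ^ 2)).sum = (s.esymm 1)^2 - 2 * s.esymm 2 ∧
    (s.map (· ^ 3)).sum = (s.esymm 1)^3 - 3 * s.esymm 1 * s.esymm 2 + 3 * s.esymm 3 ∧
    (s.map (· ^ 4)).sum = (s.esymm 1)^4 - 4 * (s.esymm 1)^2 * s.esymm 2 + 2 * (s.esymm 2)^2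
      + 4 * s.esymm 1 * s.esymm 3 - 4 * s.esymm 4 ∧
    (s.map (· ^ 5)).sum = (s.esymm 1)^5 - 5 * (s.esymm 1)^3 * s.esymm 2
      + 5 * s.esymm 1 * (s.esymm 2)^2 + 5 * (s.esymm 1)^2 * s.esymm 3
      - 5 * s.esymm 2 * s.esymm 3 - 5 * s.esymm 1 * s.esymm 4 + 5 * s.esymm 5 ∧
    (s.map (· ^ 6)).sum = (s.esymm 1)^6 - 6 * (s.esymm 1)^4 * s.esymm 2
      + 9 * (s.esymm 1)^2 * (s.esymm 2)^2 - 2 * (s.esymm 2)^3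
      + 6 * (s.esymm 1)^3 * s.esymm 3 - 12 * s.esymm 1 * s.esymm 2 * s.esymm 3
      + 3 * (s.esymm 3)^2 - 6 * (s.esymm 1)^2 * s.esymm 4 + 6 * s.esymm 2 * s.esymm 4
      + 6 * s.esymm 1 * s.esymm 5 - 6 * s.esymm 6 := by
  induction s using Multiset.induction_on with
  | empty => simp [Multiset.esymm, Multiset.powersetCard_zero_right]
  | cons a s ih =>
    obtain ⟨i1, i2, i3, i4, i5, i6⟩ := ih
    have h0 : s.esymm 0 = 1 := by simp [Multiset.esymm]
    have hc1 : (a ::ₘ s).esymm 1 = s.esymm 1 + a * s.esymm 0 := esymm_cons a s 0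
    have hc2 : (a ::ₘ s).esymm 2 = s.esymm 2 + a * s.esymm 1 := esymm_cons a s 1
    have hc3 : (a ::ₘ s).esymm 3 = s.esymm 3 + a * s.esymm 2 := esymm_cons a s 2
    have hc4 : (a ::ₘ s).esymm 4 = s.esymm 4 + a * s.esymm 3 := esymm_cons a s 3
    have hc5 : (a ::ₘ s).esymm 5 = s.esymm 5 + a * s.esymm 4 := esymm_cons a s 4
    have hc6 : (a ::ₘ s).esymm 6 = s.esymm 6 + a * s.esymm 5 := esymm_cons a s 5
    simp only [Multiset.map_cons, Multiset.sum_cons, hc1, hc2, hc3, hc4, hc5, hc6, h0,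
      i1, i2, i3, i4, i5, i6]
    refine ⟨by ring, by ring, by ring, by ring, by ring, by ring⟩


lemma psum6_of_coeffs (P : ℂ[X]) (hm : P.Monic) (e : ℕ) (A B : ℂ) (hd : P.natDegree = e+6)
    (h5 : P.coeff (e+5) = 0) (h4 : P.coeff (e+4) = 0) (h3 : P.coeff (e+3) = A)
    (h2 : P.coeff (e+2) = 0) (h1 : P.coeff (e+1) = 0) (h0 : P.coeff e = B) :
    (P.roots.map (· ^ 6)).sum = 3*A^2 - 6*B := by
  have hsp : P.Splits := IsAlgClosed.splits P
  have key : ∀ j : ℕ, j ≤ 6 → P.roots.esymm j = (-1) ^ j * P.coeff (e + (6-j)) := by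
    intro j hj
    have hle : e + (6-j) ≤ P.natDegree := by omega
    have h := Polynomial.coeff_eq_esymm_roots_of_splits hsp hle
    rw [hm.leadingCoeff, one_mul, hd, show e+6 - (e+(6-j)) = j by omega] at h
    rw [h, ← mul_assoc, ← pow_add, show j+j = 2*j by ring, pow_mul]
    norm_num
  have e1 : P.roots.esymm 1 = 0 := by
    have h := key 1 (by norm_num); rw [show e + (6-1) = e+5 by norm_num, h5] at h; simpa using h
  have e2 : P.roots.esymm 2 = 0 := by
    have h := key 2 (by norm_num); rw [show e + (6-2) = e+4 by norm_num, h4] at h; simpa using h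
  have e3 : P.roots.esymm 3 = -A := by
    have h := key 3 (by norm_num); rw [show e + (6-3) = e+3 by norm_num, h3] at h
    rw [h]; ring
  have e4 : P.roots.esymm 4 = 0 := by
    have h := key 4 (by norm_num); rw [show e + (6-4) = e+2 by norm_num, h2] at h; simpa using h
  have e5 : P.roots.esymm 5 = 0 := by
    have h := key 5 (by norm_num); rw [show e + (6-5) = e+1 by norm_num, h1] at h; simpa using h
  have e6 : P.roots.esymm 6 = B := by
    have h := key 6 (by norm_num); rw [show e + (6-6) = e by norm_num, h0] at h
    rw [h]; ring
  obtain ⟨-, -, -, -, -, p6⟩ := newton6 P.roots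
  rw [p6, e1, e2, e3, e4, e5, e6]; ring
lemma psum6_deg3 (P : ℂ[X]) (hm : P.Monic) (A : ℂ) (hd : P.natDegree = 3)
    (h2 : P.coeff 2 = 0) (h1 : P.coeff 1 = 0) (h0 : P.coeff 0 = A) :
    (P.roots.map (· ^ 6)).sum = 3*A^2 := by
  have hsp : P.Splits := IsAlgClosed.splits P
  have hcard : Multiset.card P.roots = 3 := by
    rw [Polynomial.splits_iff_card_roots.mp hsp, hd]
  have key : ∀ j : ℕ, j ≤ 3 → P.roots.esymm j = (-1) ^ j * P.coeff (3-j) := by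
    intro j hj
    have hle : 3 - j ≤ P.natDegree := by omega
    have h := Polynomial.coeff_eq_esymm_roots_of_splits hsp hle
    rw [hm.leadingCoeff, one_mul, hd, show 3 - (3-j) = j by omega] at h
    rw [h, ← mul_assoc, ← pow_add, show j+j = 2*j by ring, pow_mul]
    norm_num
  have ehigh : ∀ j : ℕ, 3 < j → P.roots.esymm j = 0 := by
    intro j hj
    rw [Multiset.esymm, Multiset.powersetCard_eq_empty j (by omega)]
    simp
  have e1 : P.roots.esymm 1 = 0 := by
    have h := key 1 (by norm_num); rw [show (3:ℕ) - 1 = 2 by norm_num, h2] at h; simpa using h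
  have e2 : P.roots.esymm 2 = 0 := by
    have h := key 2 (by norm_num); rw [show (3:ℕ) - 2 = 1 by norm_num, h1] at h; simpa using h
  have e3 : P.roots.esymm 3 = -A := by
    have h := key 3 (by norm_num); rw [show (3:ℕ) - 3 = 0 by norm_num, h0] at h
    rw [h]; ring
  obtain ⟨-, -, -, -, -, p6⟩ := newton6 P.roots
  rw [p6, e1, e2, e3, ehigh 4 (by norm_num), ehigh 5 (by norm_num), ehigh 6 (by norm_num)]
  ring

lemma coeff_mul_window {R : Type*} [CommSemiring R] (p q : R[X]) (a b k : ℕ)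
    (hp : p.natDegree ≤ a + k) (hq : q.natDegree ≤ b + k) :
    (p*q).coeff (a+b+k) = ∑ i ∈ Finset.range (k+1), p.coeff (a+i) * q.coeff (b + (k-i)) := by
  rw [Polynomial.coeff_mul, Finset.Nat.sum_antidiagonal_eq_sum_range_succ_mk]
  have key : ∑ i ∈ range (k+1), p.coeff (a+i) * q.coeff (b+(k-i))
      = ∑ x ∈ (range (k+1)).image (fun i => a+i), p.coeff x * q.coeff (a+b+k-x) := by
    rw [Finset.sum_image (by intro x _ y _ h; simp only at h; omega)]
    apply Finset.sum_congr rfl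
    intro i hi
    simp only [Finset.mem_range] at hi
    congr 2
    omega
  rw [key]
  refine (Finset.sum_subset ?_ ?_).symm
  · intro x hx
    simp only [Finset.mem_image, Finset.mem_range] at hx
    simp only [Finset.mem_range]
    omega
  · intro x hx hnx
    simp only [Finset.mem_range] at hx
    simp only [Finset.mem_image, Finset.mem_range] at hnx
    push_neg at hnx
    rcases lt_or_ge (a+k) x with h | h
    · rw [Polynomial.coeff_eq_zero_of_natDegree_lt (lt_of_le_of_lt hp h), zero_mul]
    · have hxa : x < a := by
        by_contra hc
        push_neg at hc
        exact hnx (x - a) (by omega) (by omega)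
      have : b + k < a+b+k-x := by omega
      rw [Polynomial.coeff_eq_zero_of_natDegree_lt (lt_of_le_of_lt hq this), mul_zero]

lemma key_step (P Q2 Qn : Polynomial ℚ) (g e f : ℕ) (A B Cv Ev : ℚ)
    (hrec : Q2 * Qn = X * P ^ 2 -
      4 * (P * derivative (derivative P) - (derivative P) ^ 2))
    (hfe : f + e = 2*g+1)
    (hPm : P.Monic) (hPd : P.natDegree = g+6)
    (hP5 : P.coeff (g+5) = 0) (hP4 : P.coeff (g+4) = 0) (hP3 : P.coeff (g+3) = A)
    (hP2v : P.coeff (g+2) = 0) (hP1 : P.coeff (g+1) = 0) (hP0 : P.coeff g = B)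
    (hQm : Qn.Monic) (hQd : Qn.natDegree = e+6)
    (hq5 : Qn.coeff (e+5) = 0) (hq4 : Qn.coeff (e+4) = 0) (hq3 : Qn.coeff (e+3) = Cv)
    (hq2 : Qn.coeff (e+2) = 0) (hq1 : Qn.coeff (e+1) = 0) (hq0 : Qn.coeff e = Ev) :
    Q2.Monic ∧ Q2.natDegree = f+6 ∧
    Q2.coeff (f+5) = 0 ∧ Q2.coeff (f+4) = 0 ∧
    Q2.coeff (f+3) = 2*A + 4*((g:ℚ)+6) - Cv ∧
    Q2.coeff (f+2) = 0 ∧ Q2.coeff (f+1) = 0 ∧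
    Q2.coeff f = 2*B + A^2 + 8*A*(g:ℚ) - (2*A + 4*((g:ℚ)+6) - Cv)*Cv - Ev := by
  -- degree bounds on derivatives
  have hD1 : (derivative P).natDegree ≤ g+5 :=
    le_trans (natDegree_derivative_le P) (by omega)
  have hD2 : (derivative (derivative P)).natDegree ≤ g+4 :=
    le_trans (natDegree_derivative_le _) (by omega)
  -- the "junk" part has small degree
  have hjunk : (4 * (P * derivative (derivative P) - (derivative P) ^ 2) : ℚ[X]).natDegree
      ≤ 2*g+10 := by
    refine le_trans (natDegree_mul_le) ?_
    have h1 : (P * derivative (derivative P)).natDegree ≤ 2*g+10 :=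
      le_trans (natDegree_mul_le) (by omega)
    have h2 : ((derivative P)^2 : ℚ[X]).natDegree ≤ 2*g+10 :=
      le_trans (natDegree_pow_le) (by omega)
    have h3 := natDegree_sub_le (P * derivative (derivative P)) ((derivative P)^2)
    have h4 : ((4:ℚ[X])).natDegree = 0 := natDegree_ofNat 4
    omega
  have hXP2m : (X * P^2 : ℚ[X]).Monic := (monic_X).mul (hPm.pow 2)
  have hXP2d : (X * P^2 : ℚ[X]).natDegree = 2*g+13 := by
    rw [natDegree_mul X_ne_zero (pow_ne_zero _ hPm.ne_zero), natDegree_X, natDegree_pow, hPd]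
    ring
  set R := X * P ^ 2 - 4 * (P * derivative (derivative P) - (derivative P) ^ 2) with hR
  have hRd : R.natDegree = 2*g+13 := by
    have hlt : (4 * (P * derivative (derivative P) - (derivative P) ^ 2) : ℚ[X]).natDegree
        < (X * P^2 : ℚ[X]).natDegree := by omega
    rw [hR, natDegree_sub_eq_left_of_natDegree_lt hlt, hXP2d]
  have hRc : R.coeff (2*g+13) = 1 := by
    have hlt : (4 * (P * derivative (derivative P) - (derivative P) ^ 2) : ℚ[X]).natDegree
        < 2*g+13 := by omega
    rw [hR, coeff_sub, coeff_eq_zero_of_natDegree_lt hlt, sub_zero, ← hXP2d]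
    exact hXP2m.coeff_natDegree
  have hRne : R ≠ 0 := fun h => by rw [h] at hRc; simp at hRc
  have hQ2ne : Q2 ≠ 0 := by
    intro h
    rw [h, zero_mul] at hrec
    exact hRne hrec.symm
  have hQ2d : Q2.natDegree = f + 6 := by
    have := natDegree_mul hQ2ne hQm.ne_zero
    rw [hrec, hRd, hQd] at this
    omega
  have hQ2m : Q2.Monic := by
    have hlc := leadingCoeff_mul Q2 Qn
    rw [hrec] at hlc
    have : R.leadingCoeff = 1 := by rw [leadingCoeff, hRd, hRc]
    rw [this, hQm.leadingCoeff, mul_one] at hlc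
    exact hlc.symm
  -- coefficient helpers
  have hP6 : P.coeff (g+6) = 1 := by rw [← hPd]; exact hPm.coeff_natDegree
  have hP7 : P.coeff (g+7) = 0 := coeff_eq_zero_of_natDegree_lt (by omega)
  have hP8 : P.coeff (g+8) = 0 := coeff_eq_zero_of_natDegree_lt (by omega)
  have hP9 : P.coeff (g+9) = 0 := coeff_eq_zero_of_natDegree_lt (by omega)
  have hP10 : P.coeff (g+10) = 0 := coeff_eq_zero_of_natDegree_lt (by omega)
  have hP11 : P.coeff (g+11) = 0 := coeff_eq_zero_of_natDegree_lt (by omega)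
  have hP12 : P.coeff (g+12) = 0 := coeff_eq_zero_of_natDegree_lt (by omega)
  have hP13 : P.coeff (g+13) = 0 := coeff_eq_zero_of_natDegree_lt (by omega)
  have hP14 : P.coeff (g+14) = 0 := coeff_eq_zero_of_natDegree_lt (by omega)
  have hq6 : Qn.coeff (e+6) = 1 := by rw [← hQd]; exact hQm.coeff_natDegree
  have hu6 : Q2.coeff (f+6) = 1 := by rw [← hQ2d]; exact hQ2m.coeff_natDegree
  have hu7 : Q2.coeff (f+7) = 0 := coeff_eq_zero_of_natDegree_lt (by omega)
  have hu8 : Q2.coeff (f+8) = 0 := coeff_eq_zero_of_natDegree_lt (by omega)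
  have hu9 : Q2.coeff (f+9) = 0 := coeff_eq_zero_of_natDegree_lt (by omega)
  have hu10 : Q2.coeff (f+10) = 0 := coeff_eq_zero_of_natDegree_lt (by omega)
  have hu11 : Q2.coeff (f+11) = 0 := coeff_eq_zero_of_natDegree_lt (by omega)
  have hu12 : Q2.coeff (f+12) = 0 := coeff_eq_zero_of_natDegree_lt (by omega)
  have c4 : ∀ (r : ℚ[X]) (m : ℕ), ((4:ℚ[X]) * r).coeff m = 4 * r.coeff m := by
    intro r m
    rw [show (4:ℚ[X]) = Polynomial.C (4:ℚ) from (map_ofNat Polynomial.C 4).symm, coeff_C_mul]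
  -- k = 1
  have wX1 : (X * P^2 : ℚ[X]).coeff (2*g+12) = 0 := by
    rw [show 2*g+12 = (2*g+11)+1 from rfl, coeff_X_mul, pow_two,
        show 2*g+11 = g+5+g+6 by ring, coeff_mul_window P P (g+5) g 6 (by omega) (by omega)]
    simp only [Finset.sum_range_succ, Finset.sum_range_zero, Nat.add_assoc]
    norm_num [hP0, hP1, hP2v, hP3, hP4, hP5, hP6, hP7, hP8, hP9, hP10, hP11]
  have wD1 : (P * derivative (derivative P)).coeff (2*g+12) = 0 := by
    rw [show 2*g+12 = g+6+g+6 by ring,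
        coeff_mul_window P (derivative (derivative P)) (g+6) g 6 (by omega) (by omega)]
    simp only [Finset.sum_range_succ, Finset.sum_range_zero, coeff_derivative, Nat.add_assoc]
    norm_num [hP0, hP1, hP2v, hP3, hP4, hP5, hP6, hP7, hP8, hP9, hP10, hP11, hP12, hP13, hP14]
  have wE1 : ((derivative P)^2 : ℚ[X]).coeff (2*g+12) = 0 := by
    rw [pow_two, show 2*g+12 = g+6+(g+1)+5 by ring,
        coeff_mul_window (derivative P) (derivative P) (g+6) (g+1) 5 (by omega) (by omega)]
    simp only [Finset.sum_range_succ, Finset.sum_range_zero, coeff_derivative, Nat.add_assoc]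
    norm_num [hP0, hP1, hP2v, hP3, hP4, hP5, hP6, hP7, hP8, hP9, hP10, hP11, hP12, hP13, hP14]
  have h1 := congrArg (fun p : ℚ[X] => p.coeff (2*g+12)) hrec
  simp only [hR, coeff_sub, c4, wX1, wD1, wE1] at h1
  rw [show (2*g+12) = f+5+e+6 by omega,
      coeff_mul_window Q2 Qn (f+5) e 6 (by omega) (by omega)] at h1
  simp only [Finset.sum_range_succ, Finset.sum_range_zero, Nat.add_assoc] at h1
  norm_num [hq0, hq1, hq2, hq3, hq4, hq5, hq6, hu6, hu7, hu8, hu9, hu10, hu11] at h1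
  -- k = 2
  have wX2 : (X * P^2 : ℚ[X]).coeff (2*g+11) = 0 := by
    rw [show 2*g+11 = (2*g+10)+1 from rfl, coeff_X_mul, pow_two,
        show 2*g+10 = g+4+g+6 by ring, coeff_mul_window P P (g+4) g 6 (by omega) (by omega)]
    simp only [Finset.sum_range_succ, Finset.sum_range_zero, Nat.add_assoc]
    norm_num [hP0, hP1, hP2v, hP3, hP4, hP5, hP6, hP7, hP8, hP9, hP10, hP11, hP12, hP13, hP14]
  have wD2 : (P * derivative (derivative P)).coeff (2*g+11) = 0 := by
    rw [show 2*g+11 = g+5+g+6 by ring,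
        coeff_mul_window P (derivative (derivative P)) (g+5) g 6 (by omega) (by omega)]
    simp only [Finset.sum_range_succ, Finset.sum_range_zero, coeff_derivative, Nat.add_assoc]
    norm_num [hP0, hP1, hP2v, hP3, hP4, hP5, hP6, hP7, hP8, hP9, hP10, hP11, hP12, hP13, hP14]
  have wE2 : ((derivative P)^2 : ℚ[X]).coeff (2*g+11) = 0 := by
    rw [pow_two, show 2*g+11 = g+5+(g+1)+5 by ring,
        coeff_mul_window (derivative P) (derivative P) (g+5) (g+1) 5 (by omega) (by omega)]
    simp only [Finset.sum_range_succ, Finset.sum_range_zero, coeff_derivative, Nat.add_assoc]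
    norm_num [hP0, hP1, hP2v, hP3, hP4, hP5, hP6, hP7, hP8, hP9, hP10, hP11, hP12, hP13, hP14]
  have h2 := congrArg (fun p : ℚ[X] => p.coeff (2*g+11)) hrec
  simp only [hR, coeff_sub, c4, wX2, wD2, wE2] at h2
  rw [show (2*g+11) = f+4+e+6 by omega,
      coeff_mul_window Q2 Qn (f+4) e 6 (by omega) (by omega)] at h2
  simp only [Finset.sum_range_succ, Finset.sum_range_zero, Nat.add_assoc] at h2
  norm_num [hq0, hq1, hq2, hq3, hq4, hq5, hq6, hu6, hu7, hu8, hu9, hu10, hu11, hu12] at h2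
  -- k = 3
  have wX3 : (X * P^2 : ℚ[X]).coeff (2*g+10) = 2*A := by
    rw [show 2*g+10 = (2*g+9)+1 from rfl, coeff_X_mul, pow_two,
        show 2*g+9 = g+3+g+6 by ring, coeff_mul_window P P (g+3) g 6 (by omega) (by omega)]
    simp only [Finset.sum_range_succ, Finset.sum_range_zero, Nat.add_assoc]
    norm_num [hP0, hP1, hP2v, hP3, hP4, hP5, hP6, hP7, hP8, hP9, hP10, hP11, hP12, hP13, hP14]
    push_cast
    ring
  have wD3 : (P * derivative (derivative P)).coeff (2*g+10) = ((g:ℚ)+5)*((g:ℚ)+6) := by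
    rw [show 2*g+10 = g+4+g+6 by ring,
        coeff_mul_window P (derivative (derivative P)) (g+4) g 6 (by omega) (by omega)]
    simp only [Finset.sum_range_succ, Finset.sum_range_zero, coeff_derivative, Nat.add_assoc]
    norm_num [hP0, hP1, hP2v, hP3, hP4, hP5, hP6, hP7, hP8, hP9, hP10, hP11, hP12, hP13, hP14]
    push_cast
    ring
  have wE3 : ((derivative P)^2 : ℚ[X]).coeff (2*g+10) = ((g:ℚ)+6)^2 := by
    rw [pow_two, show 2*g+10 = g+4+(g+1)+5 by ring,
        coeff_mul_window (derivative P) (derivative P) (g+4) (g+1) 5 (by omega) (by omega)]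
    simp only [Finset.sum_range_succ, Finset.sum_range_zero, coeff_derivative, Nat.add_assoc]
    norm_num [hP0, hP1, hP2v, hP3, hP4, hP5, hP6, hP7, hP8, hP9, hP10, hP11, hP12, hP13, hP14]
    push_cast
    ring
  have h3 := congrArg (fun p : ℚ[X] => p.coeff (2*g+10)) hrec
  simp only [hR, coeff_sub, c4, wX3, wD3, wE3] at h3
  rw [show (2*g+10) = f+3+e+6 by omega,
      coeff_mul_window Q2 Qn (f+3) e 6 (by omega) (by omega)] at h3
  simp only [Finset.sum_range_succ, Finset.sum_range_zero, Nat.add_assoc] at h3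
  norm_num [hq0, hq1, hq2, hq3, hq4, hq5, hq6, hu6, hu7, hu8, hu9, hu10, hu11, hu12] at h3
  have u3 : Q2.coeff (f+3) = 2*A + 4*((g:ℚ)+6) - Cv := by linear_combination h3
  -- k = 4
  have wX4 : (X * P^2 : ℚ[X]).coeff (2*g+9) = 0 := by
    rw [show 2*g+9 = (2*g+8)+1 from rfl, coeff_X_mul, pow_two,
        show 2*g+8 = g+2+g+6 by ring, coeff_mul_window P P (g+2) g 6 (by omega) (by omega)]
    simp only [Finset.sum_range_succ, Finset.sum_range_zero, Nat.add_assoc]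
    norm_num [hP0, hP1, hP2v, hP3, hP4, hP5, hP6, hP7, hP8, hP9, hP10, hP11, hP12, hP13, hP14]
  have wD4 : (P * derivative (derivative P)).coeff (2*g+9) = 0 := by
    rw [show 2*g+9 = g+3+g+6 by ring,
        coeff_mul_window P (derivative (derivative P)) (g+3) g 6 (by omega) (by omega)]
    simp only [Finset.sum_range_succ, Finset.sum_range_zero, coeff_derivative, Nat.add_assoc]
    norm_num [hP0, hP1, hP2v, hP3, hP4, hP5, hP6, hP7, hP8, hP9, hP10, hP11, hP12, hP13, hP14]
  have wE4 : ((derivative P)^2 : ℚ[X]).coeff (2*g+9) = 0 := by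
    rw [pow_two, show 2*g+9 = g+3+(g+1)+5 by ring,
        coeff_mul_window (derivative P) (derivative P) (g+3) (g+1) 5 (by omega) (by omega)]
    simp only [Finset.sum_range_succ, Finset.sum_range_zero, coeff_derivative, Nat.add_assoc]
    norm_num [hP0, hP1, hP2v, hP3, hP4, hP5, hP6, hP7, hP8, hP9, hP10, hP11, hP12, hP13, hP14]
  have h4 := congrArg (fun p : ℚ[X] => p.coeff (2*g+9)) hrec
  simp only [hR, coeff_sub, c4, wX4, wD4, wE4] at h4
  rw [show (2*g+9) = f+2+e+6 by omega,
      coeff_mul_window Q2 Qn (f+2) e 6 (by omega) (by omega)] at h4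
  simp only [Finset.sum_range_succ, Finset.sum_range_zero, Nat.add_assoc] at h4
  norm_num [hq0, hq1, hq2, hq3, hq4, hq5, hq6, hu6, hu7, hu8, hu9, hu10, hu11, hu12, h1] at h4
  -- k = 5
  have wX5 : (X * P^2 : ℚ[X]).coeff (2*g+8) = 0 := by
    rw [show 2*g+8 = (2*g+7)+1 from rfl, coeff_X_mul, pow_two,
        show 2*g+7 = g+1+g+6 by ring, coeff_mul_window P P (g+1) g 6 (by omega) (by omega)]
    simp only [Finset.sum_range_succ, Finset.sum_range_zero, Nat.add_assoc]
    norm_num [hP0, hP1, hP2v, hP3, hP4, hP5, hP6, hP7, hP8, hP9, hP10, hP11, hP12, hP13, hP14]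
  have wD5 : (P * derivative (derivative P)).coeff (2*g+8) = 0 := by
    rw [show 2*g+8 = g+2+g+6 by ring,
        coeff_mul_window P (derivative (derivative P)) (g+2) g 6 (by omega) (by omega)]
    simp only [Finset.sum_range_succ, Finset.sum_range_zero, coeff_derivative, Nat.add_assoc]
    norm_num [hP0, hP1, hP2v, hP3, hP4, hP5, hP6, hP7, hP8, hP9, hP10, hP11, hP12, hP13, hP14]
  have wE5 : ((derivative P)^2 : ℚ[X]).coeff (2*g+8) = 0 := by
    rw [pow_two, show 2*g+8 = g+2+(g+1)+5 by ring,
        coeff_mul_window (derivative P) (derivative P) (g+2) (g+1) 5 (by omega) (by omega)]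
    simp only [Finset.sum_range_succ, Finset.sum_range_zero, coeff_derivative, Nat.add_assoc]
    norm_num [hP0, hP1, hP2v, hP3, hP4, hP5, hP6, hP7, hP8, hP9, hP10, hP11, hP12, hP13, hP14]
  have h5 := congrArg (fun p : ℚ[X] => p.coeff (2*g+8)) hrec
  simp only [hR, coeff_sub, c4, wX5, wD5, wE5] at h5
  rw [show (2*g+8) = f+1+e+6 by omega,
      coeff_mul_window Q2 Qn (f+1) e 6 (by omega) (by omega)] at h5
  simp only [Finset.sum_range_succ, Finset.sum_range_zero, Nat.add_assoc] at h5
  norm_num [hq0, hq1, hq2, hq3, hq4, hq5, hq6, hu6, hu7, hu8, hu9, hu10, hu11, hu12, h2] at h5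
  -- k = 6
  have wX6 : (X * P^2 : ℚ[X]).coeff (2*g+7) = 2*B+A^2 := by
    rw [show 2*g+7 = (2*g+6)+1 from rfl, coeff_X_mul, pow_two,
        show 2*g+6 = g+0+g+6 by ring, coeff_mul_window P P (g+0) g 6 (by omega) (by omega)]
    simp only [Finset.sum_range_succ, Finset.sum_range_zero, Nat.add_assoc]
    norm_num [hP0, hP1, hP2v, hP3, hP4, hP5, hP6, hP7, hP8, hP9, hP10, hP11, hP12, hP13, hP14]
    push_cast
    ring
  have wD6 : (P * derivative (derivative P)).coeff (2*g+7) = A*(((g:ℚ)+5)*((g:ℚ)+6)+((g:ℚ)+2)*((g:ℚ)+3)) := by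
    rw [show 2*g+7 = g+1+g+6 by ring,
        coeff_mul_window P (derivative (derivative P)) (g+1) g 6 (by omega) (by omega)]
    simp only [Finset.sum_range_succ, Finset.sum_range_zero, coeff_derivative, Nat.add_assoc]
    norm_num [hP0, hP1, hP2v, hP3, hP4, hP5, hP6, hP7, hP8, hP9, hP10, hP11, hP12, hP13, hP14]
    push_cast
    ring
  have wE6 : ((derivative P)^2 : ℚ[X]).coeff (2*g+7) = 2*A*((g:ℚ)+3)*((g:ℚ)+6) := by
    rw [pow_two, show 2*g+7 = g+1+(g+1)+5 by ring,
        coeff_mul_window (derivative P) (derivative P) (g+1) (g+1) 5 (by omega) (by omega)]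
    simp only [Finset.sum_range_succ, Finset.sum_range_zero, coeff_derivative, Nat.add_assoc]
    norm_num [hP0, hP1, hP2v, hP3, hP4, hP5, hP6, hP7, hP8, hP9, hP10, hP11, hP12, hP13, hP14]
    push_cast
    ring
  have h6 := congrArg (fun p : ℚ[X] => p.coeff (2*g+7)) hrec
  simp only [hR, coeff_sub, c4, wX6, wD6, wE6] at h6
  rw [show (2*g+7) = f+e+6 by omega,
      coeff_mul_window Q2 Qn f e 6 (by omega) (by omega)] at h6
  simp only [Finset.sum_range_succ, Finset.sum_range_zero, Nat.add_assoc] at h6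
  norm_num [hq0, hq1, hq2, hq3, hq4, hq5, hq6, hu6, hu7, hu8, hu9, hu10, hu11, hu12, u3] at h6
  have u0 : Q2.coeff f = 2*B + A^2 + 8*A*(g:ℚ) - (2*A + 4*((g:ℚ)+6) - Cv)*Cv - Ev := by linear_combination h6
  exact ⟨hQ2m, hQ2d, h1, h2, u3, h4, h5, u0⟩

noncomputable def tYV (n : ℕ) : ℕ := n*(n+1)/2

lemma tYV2 (n : ℕ) : 2 * tYV n = n*(n+1) := by
  obtain ⟨k, hk⟩ := Nat.even_mul_succ_self n
  unfold tYV; omega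

noncomputable def c3q (n : ℕ) : ℚ := ((n:ℚ)-1)*(n:ℚ)*((n:ℚ)+1)*((n:ℚ)+2)/6

noncomputable def c6q (n : ℕ) : ℚ :=
  (c3q n)^2/2 - (n:ℚ)*((n:ℚ)^2-1)*((n:ℚ)+2)*((n:ℚ)^2+(n:ℚ)-5)/3

def YVInv (Q : ℕ → Polynomial ℚ) (n : ℕ) : Prop :=
  (Q n).Monic ∧ (Q n).natDegree = tYV n ∧ ∃ e, tYV n = e + 6 ∧
    (Q n).coeff (e+5) = 0 ∧ (Q n).coeff (e+4) = 0 ∧ (Q n).coeff (e+3) = c3q n ∧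
    (Q n).coeff (e+2) = 0 ∧ (Q n).coeff (e+1) = 0 ∧ (Q n).coeff e = c6q n

lemma tYV_ge (n : ℕ) (hn : 3 ≤ n) : 6 ≤ tYV n := by
  have h := tYV2 n
  have h2 : 3*4 ≤ n*(n+1) := Nat.mul_le_mul hn (by omega)
  omega

lemma inv_step (Q : ℕ → Polynomial ℚ)
    (hQrec : ∀ n : ℕ, Q (n + 2) * Q n =
      X * (Q (n + 1)) ^ 2 -
        4 * (Q (n + 1) * derivative (derivative (Q (n + 1))) -
              (derivative (Q (n + 1))) ^ 2))
    (n : ℕ) (hn : 3 ≤ n) (h1 : YVInv Q n) (h2 : YVInv Q (n+1)) : YVInv Q (n+2) := by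
  obtain ⟨hQm, hQd, e, he, hq5, hq4, hq3, hq2, hq1, hq0⟩ := h1
  obtain ⟨hPm, hPd, g, hg, hP5, hP4, hP3, hP2v, hP1, hP0⟩ := h2
  have hsum : 2 * tYV (n+2) + 2 * tYV n = 2*(2 * tYV (n+1)) + 2 := by
    rw [tYV2, tYV2, tYV2]; ring
  have hf6 : 6 ≤ tYV (n+2) := tYV_ge _ (by omega)
  set f := tYV (n+2) - 6 with hfdef
  have hf : tYV (n+2) = f + 6 := by omega
  have hfe : f + e = 2*g+1 := by omega
  have hres := key_step (Q (n+1)) (Q (n+2)) (Q n) g e f (c3q (n+1)) (c6q (n+1))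
    (c3q n) (c6q n) (hQrec n) hfe hPm (by rw [hPd, hg]) hP5 hP4 hP3 hP2v hP1 hP0
    hQm (by rw [hQd, he]) hq5 hq4 hq3 hq2 hq1 hq0
  obtain ⟨hm2, hd2, hu5, hu4, hu3, hu2, hu1, hu0⟩ := hres
  have hgq : 2*((g:ℚ)+6) = ((n:ℚ)+1)*((n:ℚ)+2) := by
    have := tYV2 (n+1)
    rw [hg] at this
    exact_mod_cast congrArg (Nat.cast : ℕ → ℚ) this
  refine ⟨hm2, by rw [hd2, hf], f, hf, hu5, hu4, ?_, hu2, hu1, ?_⟩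
  · rw [hu3]
    have hgq' : (g:ℚ) = (((n:ℚ)+1)*((n:ℚ)+2) - 12)/2 := by linarith
    rw [hgq']
    simp only [c3q]
    push_cast
    ring
  · rw [hu0]
    have hgq' : (g:ℚ) = (((n:ℚ)+1)*((n:ℚ)+2) - 12)/2 := by linarith
    rw [hgq']
    simp only [c6q, c3q]
    push_cast
    ring

lemma inv_all (Q : ℕ → Polynomial ℚ)
    (hQrec : ∀ n : ℕ, Q (n + 2) * Q n =
      X * (Q (n + 1)) ^ 2 -
        4 * (Q (n + 1) * derivative (derivative (Q (n + 1))) -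
              (derivative (Q (n + 1))) ^ 2))
    (h3 : YVInv Q 3) (h4 : YVInv Q 4) : ∀ n, 3 ≤ n → YVInv Q n := by
  have key : ∀ m : ℕ, YVInv Q (m+3) ∧ YVInv Q (m+4) := by
    intro m
    induction m with
    | zero => exact ⟨h3, h4⟩
    | succ k ih =>
      refine ⟨ih.2, ?_⟩
      have := inv_step Q hQrec (k+3) (by omega) ih.1 ih.2
      exact this
  intro n hn
  have h := (key (n-3)).1
  rwa [show n-3+3 = n by omega] at h

/-- Explicit formula for the power sum `s_{n,6}` of the roots of the
Yablonskii–Vorob'ev polynomial `Q n`. -/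
theorem powerSum_six
    (Q : ℕ → Polynomial ℚ)
    (hQ0 : Q 0 = 1) (hQ1 : Q 1 = X)
    (hQrec : ∀ n : ℕ, Q (n + 2) * Q n =
      X * (Q (n + 1)) ^ 2 -
        4 * (Q (n + 1) * derivative (derivative (Q (n + 1))) -
              (derivative (Q (n + 1))) ^ 2)) :
    ∀ n : ℕ, 1 ≤ n →
      powerSum Q n 6 =
        2 * (n : ℂ) * ((n : ℂ) ^ 2 - 1) * ((n : ℂ) + 2) * ((n : ℂ) ^ 2 + (n : ℂ) - 5) := by
  -- explicit small polynomials
  have hQ2 : Q 2 = X^3 + 4 := by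
    have h := hQrec 0
    rw [hQ0, hQ1, mul_one] at h
    rw [h]
    simp [derivative_X]
    ring
  have hQ3 : Q 3 = X^6+20*X^3-80 := by
    have h := hQrec 1
    rw [hQ1, hQ2] at h
    have key : (X*(X^3+4)^2 - 4*((X^3+4) * derivative (derivative (X^3+4 : Polynomial ℚ)) -
        (derivative (X^3+4 : Polynomial ℚ))^2)) = (X^6+20*X^3-80)*X := by
      simp [map_ofNat]
      ring
    exact mul_right_cancel₀ X_ne_zero (h.trans key)
  have hQ4 : Q 4 = X^10+60*X^7+11200*X := by
    have h := hQrec 2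
    rw [hQ2, hQ3] at h
    have hne : (X^3+4 : Polynomial ℚ) ≠ 0 := by
      intro hh
      have := congrArg (fun p => Polynomial.eval 0 p) hh
      simp at this
    have key : (X*(X^6+20*X^3-80)^2 -
        4*((X^6+20*X^3-80) * derivative (derivative (X^6+20*X^3-80 : Polynomial ℚ)) -
        (derivative (X^6+20*X^3-80 : Polynomial ℚ))^2)) = (X^10+60*X^7+11200*X)*(X^3+4) := by
      simp [map_ofNat]
      ring
    exact mul_right_cancel₀ hne (h.trans key)
  -- base invariants
  have inv3 : YVInv Q 3 := by
    refine ⟨?_, ?_, 0, by rfl, ?_, ?_, ?_, ?_, ?_, ?_⟩ <;> rw [hQ3]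
    · monicity!
    · rw [show tYV 3 = 6 from rfl]; compute_degree!
    all_goals (
      rw [show (20:Polynomial ℚ) = Polynomial.C (20:ℚ) from (map_ofNat _ _).symm,
          show (80:Polynomial ℚ) = Polynomial.C (80:ℚ) from (map_ofNat _ _).symm]
      norm_num [coeff_X_pow, c3q, c6q])
  have inv4 : YVInv Q 4 := by
    refine ⟨?_, ?_, 4, by rfl, ?_, ?_, ?_, ?_, ?_, ?_⟩ <;> rw [hQ4]
    · monicity!
    · rw [show tYV 4 = 10 from rfl]; compute_degree!
    all_goals (
      rw [show (60:Polynomial ℚ) = Polynomial.C (60:ℚ) from (map_ofNat _ _).symm,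
          show (11200:Polynomial ℚ) = Polynomial.C (11200:ℚ) from (map_ofNat _ _).symm]
      norm_num [coeff_X_pow, c3q, c6q])
  have hinv := inv_all Q hQrec inv3 inv4
  intro n hn
  match n, hn with
  | 1, _ => 
    rw [powerSum, hQ1]
    simp [Polynomial.map_X, roots_X]
  | 2, _ =>
    rw [powerSum, hQ2]
    have hmap : (X^3+4 : Polynomial ℚ).map (algebraMap ℚ ℂ) = X^3+4 := by
      simp [Polynomial.map_add, Polynomial.map_pow, Polynomial.map_X, Polynomial.map_ofNat]
    rw [hmap]
    have h48 := psum6_deg3 (X^3+4 : Polynomial ℂ) (by monicity!) 4 (by compute_degree!)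
      ?_ ?_ ?_
    · rw [h48]; norm_num
    all_goals (
      rw [show (4:Polynomial ℂ) = Polynomial.C (4:ℂ) from (map_ofNat _ _).symm]
      norm_num [coeff_X_pow])
  | (m+3), _ =>
    set n := m+3 with hndef
    obtain ⟨hm, hd, e, he, h5, h4c, h3c, h2c, h1c, h0c⟩ := hinv n (by omega)
    set Pc := (Q n).map (algebraMap ℚ ℂ) with hPc
    have hmc : Pc.Monic := hm.map _
    have hdc : Pc.natDegree = e+6 := by rw [hPc, hm.natDegree_map, hd, he]
    have hcoeff : ∀ j, Pc.coeff j = algebraMap ℚ ℂ ((Q n).coeff j) := fun j => coeff_map _ j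
    have hs := psum6_of_coeffs Pc hmc e (algebraMap ℚ ℂ (c3q n)) (algebraMap ℚ ℂ (c6q n)) hdc
      (by rw [hcoeff, h5, map_zero]) (by rw [hcoeff, h4c, map_zero]) (by rw [hcoeff, h3c])
      (by rw [hcoeff, h2c, map_zero]) (by rw [hcoeff, h1c, map_zero]) (by rw [hcoeff, h0c])
    rw [powerSum, ← hPc, hs]
    rw [eq_ratCast (algebraMap ℚ ℂ) (c3q n), eq_ratCast (algebraMap ℚ ℂ) (c6q n)]
    simp only [c3q, c6q]
    push_cast
    ring

end Aux
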